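/- Let Ω be a set and Σ : Ω × Ω → ℝ with Σ(P,P) = 0 for all P; let G and A be its symmetric and antisymmetric parts. Let P₀,P₁,P₂ ∈ Ω, write G_{ik} = G(Pᵢ,Pₖ), A_{ik} = A(Pᵢ,Pₖ), and η_f = A₁₀ + A₀₂ + A₂₁, and assume G₀₂ ≥ 0, G₁₀ ≥ 0 and G₁₂ − η_f ≥ 0. Then the quantity F_f(P₀,P₁,P₂) = |P₀P₁|²·|P₀P₂|² − (P₀P₁.P₀P₂)² factorizes as F_f = −F₀·F₁·F₂·F₃, where F₀ = √G₀₂ + √G₁₀ + √(G₁₂ − η_f), F₁ = √G₀₂ − √G₁₀ + √(G₁₂ − η_f), F₂ = √G₀₂ + √G₁₀ − √(G₁₂ − η_f), F₃ = √G₀₂ − √G₁₀ − √(G₁₂ − η_f). (Factorization of the future first order tube equation.) -/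

import Mathlib

/-!
Put `x = G₀₂`, `y = G₁₀`, `z = G₁₂ − η_f`. Since `Σ = G + A` vanishes on the diagonal,
`|P₀P₁|² = 2y`, `|P₀P₂|² = 2x` and `(P₀P₁.P₀P₂) = x + y − z`, so
`F_f = 4xy − (x + y − z)² = −(x² + y² + z² − 2(xy + yz + zx))`.
The bracket is Heron's quartic, which factors as `∏ (√x ± √y ± √z)` over the four sign patterns
with a `+` in front of `√x`.
-/

/-- The scalar Σ-product `(P₀P₁.Q₀Q₁) = Σ(P₀,Q₁) − Σ(P₁,Q₁) − Σ(P₀,Q₀) + Σ(P₁,Q₀)`. -/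
def ssp {Ω : Type} (W : Ω → Ω → ℝ) (P0 P1 Q0 Q1 : Ω) : ℝ :=
  W P0 Q1 - W P1 Q1 - W P0 Q0 + W P1 Q0

/-- The symmetric part `G(P,Q) = ½(Σ(P,Q) + Σ(Q,P))` of the world function. -/
noncomputable def Gpart {Ω : Type} (W : Ω → Ω → ℝ) (P Q : Ω) : ℝ := (1 / 2) * (W P Q + W Q P)

/-- The antisymmetric part `A(P,Q) = ½(Σ(P,Q) − Σ(Q,P))` of the world function. -/
noncomputable def Apart {Ω : Type} (W : Ω → Ω → ℝ) (P Q : Ω) : ℝ := (1 / 2) * (W P Q - W Q P)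

theorem Real.sqrt_add_sub_mul_eq_heron {x y z : ℝ} (hx : 0 ≤ x) (hy : 0 ≤ y) (hz : 0 ≤ z) :
    (√x + √y + √z) * (√x - √y + √z) * (√x + √y - √z) * (√x - √y - √z) =
      x ^ 2 + y ^ 2 + z ^ 2 - 2 * (x * y + y * z + z * x) :=
  calc _ = (√x ^ 2) ^ 2 + (√y ^ 2) ^ 2 + (√z ^ 2) ^ 2 -
        2 * (√x ^ 2 * √y ^ 2 + √y ^ 2 * √z ^ 2 + √z ^ 2 * √x ^ 2) := by ring
    _ = _ := by rw [Real.sq_sqrt hx, Real.sq_sqrt hy, Real.sq_sqrt hz]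

section WorldFunction

variable {Ω : Type} (W : Ω → Ω → ℝ)

theorem Gpart_comm (P Q : Ω) : Gpart W P Q = Gpart W Q P := by
  simp only [Gpart]
  ring

variable {W}

theorem ssp_self_eq_two_mul_Gpart (hzero : ∀ P, W P P = 0) (P Q : Ω) :
    ssp W P Q P Q = 2 * Gpart W P Q := by
  simp only [ssp, Gpart, hzero]
  ring

theorem ssp_common_base_eq (hzero : ∀ P, W P P = 0) (P0 P1 P2 : Ω) :
    ssp W P0 P1 P0 P2 = Gpart W P0 P2 + Gpart W P1 P0 -
      (Gpart W P1 P2 - (Apart W P1 P0 + Apart W P0 P2 + Apart W P2 P1)) := by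
  simp only [ssp, Gpart, Apart, hzero]
  ring

end WorldFunction

theorem future_tube_factorization
    (Ω : Type) (W : Ω → Ω → ℝ) (hzero : ∀ P, W P P = 0) (P0 P1 P2 : Ω)
    (h02 : 0 ≤ Gpart W P0 P2) (h10 : 0 ≤ Gpart W P1 P0)
    (h12 : 0 ≤ Gpart W P1 P2 -
      (Apart W P1 P0 + Apart W P0 P2 + Apart W P2 P1)) :
    ssp W P0 P1 P0 P1 * ssp W P0 P2 P0 P2 - (ssp W P0 P1 P0 P2) ^ 2 =
      -((Real.sqrt (Gpart W P0 P2) + Real.sqrt (Gpart W P1 P0) +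
          Real.sqrt (Gpart W P1 P2 -
            (Apart W P1 P0 + Apart W P0 P2 + Apart W P2 P1))) *
        (Real.sqrt (Gpart W P0 P2) - Real.sqrt (Gpart W P1 P0) +
          Real.sqrt (Gpart W P1 P2 -
            (Apart W P1 P0 + Apart W P0 P2 + Apart W P2 P1))) *
        (Real.sqrt (Gpart W P0 P2) + Real.sqrt (Gpart W P1 P0) -
          Real.sqrt (Gpart W P1 P2 -
            (Apart W P1 P0 + Apart W P0 P2 + Apart W P2 P1))) *
        (Real.sqrt (Gpart W P0 P2) - Real.sqrt (Gpart W P1 P0) -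
          Real.sqrt (Gpart W P1 P2 -
            (Apart W P1 P0 + Apart W P0 P2 + Apart W P2 P1)))) := by
  rw [Real.sqrt_add_sub_mul_eq_heron h02 h10 h12, ssp_self_eq_two_mul_Gpart hzero,
    ssp_self_eq_two_mul_Gpart hzero, Gpart_comm W P0 P1, ssp_common_base_eq hzero]
  ring
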